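/- Let n ≥ 1 be an integer, M > 0, and let g : ℝⁿ → ℂ be a Schwartz function with Fourier representation g(x') = ∫_{ℝⁿ} ĝ(ξ') e^{i x'·ξ'} dξ'. Set Λ_{M+1/2} = ( ∫_ℝ (1 + t²)^{−(M+1/2)} dt )^{1/2} and define f : ℝ^{n+1} → ℂ by f(x', x_{n+1}) = ∫_{ℝ^{n+1}} F(ξ', ξ_{n+1}) e^{i (x'·ξ' + x_{n+1} ξ_{n+1})} dξ' dξ_{n+1}, where F(ξ', ξ_{n+1}) = Λ_{M+1/2}^{−2} (1 + ‖ξ'‖²)^M ĝ(ξ') (1 + ‖ξ'‖² + ξ_{n+1}²)^{−(M+1/2)}. Then f is well defined and its trace on the hyperplane {x_{n+1} = 0} equals g: f(x', 0) = g(x') for every x' ∈ ℝⁿ. Moreover, if g is symmetric under permutations of its n variables, so is f. -/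

import Mathlib

/-!
For fixed `ξ'`, the profile `s ↦ Λ⁻² (1 + ‖ξ'‖²) ^ M (1 + ‖ξ'‖² + s²) ^ (-(M + 1/2))` has integral
`1`: the substitution `s = √(1 + ‖ξ'‖²) t` turns `∫ (1 + ‖ξ'‖² + s²) ^ (-(M + 1/2)) ds` into
`(1 + ‖ξ'‖²) ^ (-M) Λ²`. The kernel is therefore integrable and, by Fubini at `x_{n+1} = 0`, the
`ξ_{n+1}`-integral collapses to `ĝ(ξ')`, giving back the representation of `g`.

For the symmetry, `ĝ` is determined almost everywhere by `g`, since the Fourier transform is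
injective on `L¹` (test against `φ = 𝓕 (𝓕⁻ Φ)` for Schwartz `Φ` and move `𝓕` across the integral).
A permutation `P` of coordinates is a linear isometry, so `g ∘ P = g` forces `ĝ ∘ P = ĝ` a.e.; as
the kernel depends on `ξ'` only through `‖ξ'‖` and `ĝ(ξ')`, the substitution `ξ' ↦ P ξ'` gives
`f(P x', t) = f(x', t)`.
-/

open MeasureTheory
open scoped RealInnerProductSpace

noncomputable section

/-- The Fourier-side extension kernel
`F(ξ', ξ_{n+1}) = Λ_{M+1/2}^{−2} (1+‖ξ'‖²)^M ĝ(ξ') (1+‖ξ'‖²+ξ_{n+1}²)^{−(M+1/2)}`. -/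
def extKernel {n : ℕ} (M : ℝ) (ghat : EuclideanSpace ℝ (Fin n) → ℂ)
    (ζ : EuclideanSpace ℝ (Fin n) × ℝ) : ℂ :=
  (((Real.sqrt (∫ t : ℝ, (1 + t ^ 2) ^ (-(M + 1 / 2))) ^ 2)⁻¹ *
      ((1 + ‖ζ.1‖ ^ 2) ^ M * (1 + ‖ζ.1‖ ^ 2 + ζ.2 ^ 2) ^ (-(M + 1 / 2))) : ℝ) : ℂ) *
    ghat ζ.1

/-- The extension `f(x', x_{n+1}) = ∫ F(ξ) e^{i(x'·ξ' + x_{n+1} ξ_{n+1})} dξ` of `g`. -/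
def extFun {n : ℕ} (M : ℝ) (ghat : EuclideanSpace ℝ (Fin n) → ℂ)
    (x : EuclideanSpace ℝ (Fin n)) (t : ℝ) : ℂ :=
  ∫ ζ : EuclideanSpace ℝ (Fin n) × ℝ,
    extKernel M ghat ζ * Complex.exp (Complex.I * (((⟪x, ζ.1⟫ + t * ζ.2 : ℝ)) : ℂ))

theorem integrable_one_add_sq_rpow_neg {p : ℝ} (hp : 1 / 2 < p) :
    Integrable fun t : ℝ => (1 + t ^ 2) ^ (-p) := by
  have h := integrable_rpow_neg_one_add_norm_sq (E := ℝ) (μ := volume) (r := 2 * p)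
    (by simp; linarith)
  simpa [neg_div, mul_div_cancel_left₀ p two_ne_zero] using h

theorem add_sq_rpow_neg_eq_mul {p c : ℝ} (hc : 0 < c) (s : ℝ) :
    (c + s ^ 2) ^ (-p) = c ^ (-p) * (1 + ((√c)⁻¹ * s) ^ 2) ^ (-p) := by
  rw [← Real.mul_rpow hc.le (by positivity), mul_add, mul_one, mul_pow, inv_pow,
    Real.sq_sqrt hc.le, mul_inv_cancel_left₀ hc.ne']

theorem integrable_add_sq_rpow_neg {p c : ℝ} (hp : 1 / 2 < p) (hc : 0 < c) :
    Integrable fun s : ℝ => (c + s ^ 2) ^ (-p) := by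
  simp_rw [add_sq_rpow_neg_eq_mul hc]
  exact ((integrable_one_add_sq_rpow_neg hp).comp_mul_left' (by positivity)).const_mul _

theorem integral_add_sq_rpow_neg {p c : ℝ} (hc : 0 < c) :
    ∫ s : ℝ, (c + s ^ 2) ^ (-p) = c ^ (1 / 2 - p) * ∫ t : ℝ, (1 + t ^ 2) ^ (-p) := by
  simp_rw [add_sq_rpow_neg_eq_mul hc]
  rw [integral_const_mul, Measure.integral_comp_mul_left (fun t => (1 + t ^ 2) ^ (-p)),
    inv_inv, abs_of_pos (Real.sqrt_pos.2 hc), smul_eq_mul, ← mul_assoc, Real.sqrt_eq_rpow,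
    ← Real.rpow_add hc]
  ring_nf

theorem integral_one_add_sq_rpow_neg_pos {p : ℝ} (hp : 1 / 2 < p) :
    0 < ∫ t : ℝ, (1 + t ^ 2) ^ (-p) :=
  integral_pos_of_integrable_nonneg_nonzero (x := 0)
    ((by fun_prop : Continuous fun t : ℝ => 1 + t ^ 2).rpow_const fun t => .inl (by positivity))
    (integrable_one_add_sq_rpow_neg hp) (fun t => by positivity) (by simp)

open scoped FourierTransform

section Fourier

variable {V : Type*} [NormedAddCommGroup V] [InnerProductSpace ℝ V] [FiniteDimensional ℝ V]
  [MeasurableSpace V] [BorelSpace V]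

theorem MeasureTheory.Integrable.ae_eq_of_fourier_eq {f₁ f₂ : V → ℂ} (h₁ : Integrable f₁)
    (h₂ : Integrable f₂) (h : 𝓕 f₁ = 𝓕 f₂) : f₁ =ᵐ[volume] f₂ := by
  refine ae_eq_of_integral_contDiff_smul_eq h₁.locallyIntegrable h₂.locallyIntegrable
    fun φ hφ hφc => ?_
  let Φ : SchwartzMap V ℂ :=
    (hφc.comp_left Complex.ofReal_zero).toSchwartzMap (Complex.ofRealCLM.contDiff.comp hφ)
  have hΦ : ∀ f : V → ℂ, Integrable f → ∫ x, φ x • f x = ∫ ξ, 𝓕⁻ Φ ξ • 𝓕 f ξ := by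
    intro f hf
    have hswap := VectorFourier.integral_fourierIntegral_smul_eq_flip (L := innerₗ V)
      Real.continuous_fourierChar continuous_inner ((𝓕⁻ Φ).integrable (μ := volume)) hf
    rw [flip_innerₗ] at hswap
    refine Eq.trans ?_ hswap
    change _ = ∫ ξ, 𝓕 ⇑(𝓕⁻ Φ : SchwartzMap V ℂ) ξ • f ξ
    rw [← SchwartzMap.fourier_coe]
    simp only [Complex.real_smul, FourierInvPair.fourier_fourierInv_eq, smul_eq_mul, Φ]
    rfl
  rw [hΦ f₁ h₁, hΦ f₂ h₂, h]

theorem fourier_eq_of_integral_mul_cexp {g ghat : V → ℂ}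
    (hrep : ∀ x, g x = ∫ ξ, ghat ξ * Complex.exp (Complex.I * ((⟪x, ξ⟫ : ℝ) : ℂ))) (w : V) :
    𝓕 ghat w = g (-(2 * Real.pi) • w) := by
  rw [Real.fourier_eq', hrep]
  congr 1 with ξ
  rw [smul_eq_mul, mul_comm, real_inner_smul_left, real_inner_comm]
  push_cast
  ring_nf

theorem comp_linearIsometryEquiv_ae_eq {g ghat : V → ℂ} (hghat : Integrable ghat)
    (hrep : ∀ x, g x = ∫ ξ, ghat ξ * Complex.exp (Complex.I * ((⟪x, ξ⟫ : ℝ) : ℂ)))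
    (A : V ≃ₗᵢ[ℝ] V) (hA : ∀ x, g (A x) = g x) :
    ghat ∘ A =ᵐ[volume] ghat := by
  refine ((A.measurePreserving.integrable_comp_emb
    A.toHomeomorph.measurableEmbedding).2 hghat).ae_eq_of_fourier_eq hghat ?_
  ext w
  rw [Real.fourier_comp_linearIsometry, fourier_eq_of_integral_mul_cexp hrep,
    fourier_eq_of_integral_mul_cexp hrep, ← A.map_smul, hA]

end Fourier

def extProfile (M r s : ℝ) : ℝ :=
  (Real.sqrt (∫ t : ℝ, (1 + t ^ 2) ^ (-(M + 1 / 2))) ^ 2)⁻¹ *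
    ((1 + r ^ 2) ^ M * (1 + r ^ 2 + s ^ 2) ^ (-(M + 1 / 2)))

theorem extKernel_apply {n : ℕ} (M : ℝ) (ghat : EuclideanSpace ℝ (Fin n) → ℂ)
    (ζ : EuclideanSpace ℝ (Fin n) × ℝ) :
    extKernel M ghat ζ = (extProfile M ‖ζ.1‖ ζ.2 : ℂ) * ghat ζ.1 :=
  rfl

theorem extProfile_nonneg (M r s : ℝ) : 0 ≤ extProfile M r s := by
  unfold extProfile
  positivity

theorem continuous_extProfile (M : ℝ) : Continuous fun p : ℝ × ℝ => extProfile M p.1 p.2 := by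
  unfold extProfile
  refine continuous_const.mul (.mul ?_ ?_) <;>
    exact (by fun_prop : Continuous _).rpow_const fun p => .inl (by positivity)

theorem extProfile_eq_mul_rpow (M r s : ℝ) :
    extProfile M r s = ((1 + r ^ 2) ^ M / ∫ t : ℝ, (1 + t ^ 2) ^ (-(M + 1 / 2))) *
      (1 + r ^ 2 + s ^ 2) ^ (-(M + 1 / 2)) := by
  rw [extProfile, Real.sq_sqrt (integral_nonneg fun t => by positivity)]
  ring

theorem integrable_extProfile {M : ℝ} (hM : 0 < M) (r : ℝ) : Integrable (extProfile M r) := by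
  rw [show extProfile M r = _ from funext (extProfile_eq_mul_rpow M r)]
  exact (integrable_add_sq_rpow_neg (by linarith) (by positivity)).const_mul _

theorem integral_extProfile {M : ℝ} (hM : 0 < M) (r : ℝ) : ∫ s, extProfile M r s = 1 := by
  have hc : (0 : ℝ) < 1 + r ^ 2 := by positivity
  simp_rw [extProfile_eq_mul_rpow M]
  rw [integral_const_mul, integral_add_sq_rpow_neg hc, div_mul_eq_mul_div, ← mul_assoc,
    ← Real.rpow_add hc, show M + (1 / 2 - (M + 1 / 2)) = 0 by ring, Real.rpow_zero, one_mul,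
    div_self (integral_one_add_sq_rpow_neg_pos (by linarith)).ne']

section Extension

variable {n : ℕ} {M : ℝ} {ghat : EuclideanSpace ℝ (Fin n) → ℂ}

theorem integral_extKernel_fiber (hM : 0 < M) (ξ : EuclideanSpace ℝ (Fin n)) :
    ∫ s, extKernel M ghat (ξ, s) = ghat ξ := by
  simp_rw [extKernel_apply, integral_mul_const, integral_complex_ofReal, integral_extProfile hM,
    Complex.ofReal_one, one_mul]

theorem integrable_extKernel (hM : 0 < M) (hghat : Integrable ghat) :
    Integrable (extKernel M ghat) := by
  have hmeas : AEStronglyMeasurable (extKernel M ghat) := by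
    simp_rw [funext (extKernel_apply M ghat)]
    exact (Complex.continuous_ofReal.comp ((continuous_extProfile M).comp
      (continuous_fst.norm.prodMk continuous_snd))).aestronglyMeasurable.mul hghat.1.comp_fst
  rw [Measure.volume_eq_prod, integrable_prod_iff hmeas]
  refine ⟨.of_forall fun ξ => ?_, ?_⟩
  · simp_rw [extKernel_apply]
    exact (integrable_extProfile hM _).ofReal.mul_const _
  · refine hghat.norm.congr (.of_forall fun ξ => ?_)
    simp_rw [extKernel_apply, norm_mul, Complex.norm_real,
      Real.norm_of_nonneg (extProfile_nonneg ..), integral_mul_const, integral_extProfile hM,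
      one_mul]

theorem integrable_extKernel_mul_cexp (hM : 0 < M) (hghat : Integrable ghat)
    (x : EuclideanSpace ℝ (Fin n)) (t : ℝ) :
    Integrable fun ζ : EuclideanSpace ℝ (Fin n) × ℝ =>
      extKernel M ghat ζ * Complex.exp (Complex.I * (((⟪x, ζ.1⟫ + t * ζ.2 : ℝ)) : ℂ)) := by
  refine (integrable_extKernel hM hghat).mul_bdd (c := 1) (Continuous.aestronglyMeasurable ?_)
    (.of_forall fun ζ => by rw [mul_comm, Complex.norm_exp_ofReal_mul_I])
  fun_prop

theorem extFun_apply_zero (hM : 0 < M) (hghat : Integrable ghat)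
    (x : EuclideanSpace ℝ (Fin n)) :
    extFun M ghat x 0 = ∫ ξ, ghat ξ * Complex.exp (Complex.I * ((⟪x, ξ⟫ : ℝ) : ℂ)) := by
  have h := integrable_extKernel_mul_cexp hM hghat x 0
  rw [Measure.volume_eq_prod] at h
  rw [extFun, Measure.volume_eq_prod, integral_prod _ h]
  simp_rw [zero_mul, add_zero, integral_mul_const, integral_extKernel_fiber hM]

theorem extFun_linearIsometryEquiv_apply
    (A : EuclideanSpace ℝ (Fin n) ≃ₗᵢ[ℝ] EuclideanSpace ℝ (Fin n))
    (hA : ghat ∘ A =ᵐ[volume] ghat) (x : EuclideanSpace ℝ (Fin n)) (t : ℝ) :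
    extFun M ghat (A x) t = extFun M ghat x t := by
  let B := A.toHomeomorph.toMeasurableEquiv.prodCongr (MeasurableEquiv.refl ℝ)
  have hB : MeasurePreserving B (volume.prod volume) (volume.prod volume) :=
    A.measurePreserving.prod (MeasurePreserving.id _)
  rw [extFun, extFun, Measure.volume_eq_prod, ← hB.integral_comp B.measurableEmbedding]
  refine integral_congr_ae ?_
  filter_upwards [Measure.quasiMeasurePreserving_fst.ae_eq_comp hA] with ζ hζ
  change extKernel M ghat (A ζ.1, ζ.2) *
    Complex.exp (Complex.I * (((⟪A x, A ζ.1⟫ + t * ζ.2 : ℝ)) : ℂ)) = _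
  rw [extKernel_apply, extKernel_apply, A.inner_map_map, A.norm_map,
    show ghat (A ζ.1) = ghat ζ.1 from hζ]

end Extension

theorem stmt9_general (n : ℕ) (M : ℝ) (hM : 0 < M)
    (g : SchwartzMap (EuclideanSpace ℝ (Fin n)) ℂ)
    (ghat : EuclideanSpace ℝ (Fin n) → ℂ) (hghat : Integrable ghat)
    (hrep : ∀ x : EuclideanSpace ℝ (Fin n),
      g x = ∫ ξ : EuclideanSpace ℝ (Fin n),
        ghat ξ * Complex.exp (Complex.I * ((⟪x, ξ⟫ : ℝ) : ℂ))) :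
    (∀ (x : EuclideanSpace ℝ (Fin n)) (t : ℝ),
      Integrable (fun ζ : EuclideanSpace ℝ (Fin n) × ℝ =>
        extKernel M ghat ζ * Complex.exp (Complex.I * (((⟪x, ζ.1⟫ + t * ζ.2 : ℝ)) : ℂ))))
    ∧ (∀ x : EuclideanSpace ℝ (Fin n), extFun M ghat x 0 = g x)
    ∧ ((∀ (σ : Equiv.Perm (Fin n)) (x : EuclideanSpace ℝ (Fin n)),
          g (WithLp.toLp 2 (fun i => x (σ i))) = g x) →
        ∀ (σ : Equiv.Perm (Fin n)) (x : EuclideanSpace ℝ (Fin n)) (t : ℝ),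
          extFun M ghat (WithLp.toLp 2 (fun i => x (σ i))) t = extFun M ghat x t) := by
  refine ⟨integrable_extKernel_mul_cexp hM hghat,
    fun x => by rw [extFun_apply_zero hM hghat, hrep], fun hsym σ => ?_⟩
  -- `piLpCongrLeft 2 ℝ ℝ σ.symm x` unfolds to `toLp 2 fun i => x (σ i)`
  let P : EuclideanSpace ℝ (Fin n) ≃ₗᵢ[ℝ] EuclideanSpace ℝ (Fin n) :=
    LinearIsometryEquiv.piLpCongrLeft 2 ℝ ℝ σ.symm
  exact extFun_linearIsometryEquiv_apply P (comp_linearIsometryEquiv_ae_eq hghat hrep P (hsym σ))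

/-- The explicit Fourier-side extension of a Schwartz function `g` is well defined, its trace on
the hyperplane `{x_{n+1} = 0}` equals `g`, and it is symmetric in the first `n` variables as soon
as `g` is symmetric. -/
theorem stmt9 (n : ℕ) (hn : 1 ≤ n) (M : ℝ) (hM : 0 < M)
    (g : SchwartzMap (EuclideanSpace ℝ (Fin n)) ℂ)
    (ghat : EuclideanSpace ℝ (Fin n) → ℂ) (hghat : Integrable ghat)
    (hrep : ∀ x : EuclideanSpace ℝ (Fin n),
      g x = ∫ ξ : EuclideanSpace ℝ (Fin n),
        ghat ξ * Complex.exp (Complex.I * ((⟪x, ξ⟫ : ℝ) : ℂ))) :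
    (∀ (x : EuclideanSpace ℝ (Fin n)) (t : ℝ),
      Integrable (fun ζ : EuclideanSpace ℝ (Fin n) × ℝ =>
        extKernel M ghat ζ * Complex.exp (Complex.I * (((⟪x, ζ.1⟫ + t * ζ.2 : ℝ)) : ℂ))))
    ∧ (∀ x : EuclideanSpace ℝ (Fin n), extFun M ghat x 0 = g x)
    ∧ ((∀ (σ : Equiv.Perm (Fin n)) (x : EuclideanSpace ℝ (Fin n)),
          g (WithLp.toLp 2 (fun i => x (σ i))) = g x) →
        ∀ (σ : Equiv.Perm (Fin n)) (x : EuclideanSpace ℝ (Fin n)) (t : ℝ),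
          extFun M ghat (WithLp.toLp 2 (fun i => x (σ i))) t = extFun M ghat x t) :=
  stmt9_general n M hM g ghat hghat hrep
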